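/- (Generalized indirect sum, Walsh transform identity) Let f_i : V_r → ZMod (p^k) for i ∈ (ZMod p)^t be generalized s-plateaued, and let g_0, ..., g_t : V_m → ZMod p be bent functions such that for each j ∈ (ZMod p)^t, G_j := (1 − ∑ j_i) g_0 + ∑ j_i g_i is bent with dual G_j* = (1 − ∑ j_i) g_0* + ∑ j_i g_i* and W_{G_j}(b) = u(b) p^{m/2} ζ_p^{G_j*(b)}, with u : V_m → {±1, ±i} independent of j. Let g : (ZMod p)^t → ZMod (p^k) be arbitrary and define h(x,y) = f_{(g_0(y)−g_1(y), ..., g_0(y)−g_t(y))}(x) + p^{k−1} g_0(y) + g(g_0(y)−g_1(y), ..., g_0(y)−g_t(y)). Then for all (a,b): W_h(a,b) = u(b) p^{m/2} ζ_p^{g_0*(b)} ζ_{p^k}^{g(g_0*(b)−g_1*(b), ..., g_0*(b)−g_t*(b))} · W_{f_{(g_0*(b)−g_1*(b), ..., g_0*(b)−g_t*(b))}}(a). In particular h is a generalized s-plateaued function on V_r × V_m. -/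

import Mathlib

/-- The complex primitive `m`-th root of unity `e^{2πi/m}`. -/
noncomputable def zeta (m : ℕ) : ℂ := Complex.exp (2 * Real.pi * Complex.I / m)

/-- Inner product on `(ZMod p)^n`. -/
def dot {p n : ℕ} (a x : Fin n → ZMod p) : ZMod p := ∑ i, a i * x i

/-- Walsh transform of a generalized p-ary function `f : (ZMod p)^n → ZMod (p^k)`. -/
noncomputable def walsh (p n k : ℕ) [Fact (Nat.Prime p)]
    (f : (Fin n → ZMod p) → ZMod (p ^ k)) (a : Fin n → ZMod p) : ℂ :=
  ∑ x : Fin n → ZMod p, zeta (p ^ k) ^ (f x).val * zeta p ^ ((-(dot a x)).val)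

/-- Walsh transform of a p-ary function on `(ZMod p)^m`. -/
noncomputable def walshP (p m : ℕ) [Fact (Nat.Prime p)]
    (g : (Fin m → ZMod p) → ZMod p) (b : Fin m → ZMod p) : ℂ :=
  ∑ y : Fin m → ZMod p, zeta p ^ (g y).val * zeta p ^ ((-(dot b y)).val)

/-- Walsh transform of a generalized p-ary function on `(ZMod p)^r × (ZMod p)^m`. -/
noncomputable def walsh2 (p r m k : ℕ) [Fact (Nat.Prime p)]
    (h : (Fin r → ZMod p) × (Fin m → ZMod p) → ZMod (p ^ k))
    (a : (Fin r → ZMod p) × (Fin m → ZMod p)) : ℂ :=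
  ∑ x : (Fin r → ZMod p) × (Fin m → ZMod p),
    zeta (p ^ k) ^ (h x).val * zeta p ^ ((-(dot a.1 x.1 + dot a.2 x.2)).val)


/-!
Summing over `x` first, `W_h(a, b) = ∑_y A(J y) ζ_p^{g₀(y) - b·y}` with
`J y = (g₀(y) - gᵢ(y))ᵢ` and `A j = W_{f_j}(a) ζ_{p^k}^{g(j)}`. Expanding `A` by Fourier inversion
on `(ZMod p)^t` leaves the sums `∑_y ζ_p^{c·J(y) + g₀(y) - b·y}`, which are the Walsh values of the
bent functions `G_{-c} = g₀ + c·J`, namely `u(b) p^{m/2} ζ_p^{g₀*(b) + c·J*(b)}`. Undoing the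
Fourier expansion then gives `u(b) p^{m/2} ζ_p^{g₀*(b)} A(J*(b))`.
-/

open Finset ZMod

lemma dot_sub {n t : ℕ} (c u v : Fin t → ZMod n) : dot c (u - v) = dot c u - dot c v := by
  simp only [dot, Pi.sub_apply, mul_sub, sum_sub_distrib]

lemma combination_neg_eq_add_dot {n t : ℕ} (c : Fin t → ZMod n) (a : ZMod n)
    (b : Fin t → ZMod n) :
    (1 - ∑ i, -c i) * a + ∑ i, -c i * b i = a + dot c (fun i => a - b i) := by
  simp only [dot, mul_sub, sum_sub_distrib, sum_neg_distrib, neg_mul, ← sum_mul]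
  ring

section StdAddChar

variable {n : ℕ} [NeZero n]

lemma zeta_pow_val (a : ZMod n) : zeta n ^ a.val = stdAddChar a := by
  rw [stdAddChar_apply, toCircle_apply, zeta, ← Complex.exp_nat_mul]
  congr 1
  ring

lemma norm_stdAddChar (a : ZMod n) : ‖stdAddChar a‖ = 1 := by
  rw [stdAddChar_apply, Circle.norm_coe]

lemma stdAddChar_sum {ι : Type*} (s : Finset ι) (f : ι → ZMod n) :
    stdAddChar (∑ i ∈ s, f i) = ∏ i ∈ s, stdAddChar (f i) := by
  induction s using Finset.cons_induction with
  | empty => simp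
  | cons i s hi ih => rw [sum_cons, prod_cons, AddChar.map_add_eq_mul, ih]

lemma stdAddChar_pow_mul_val {k : ℕ} (hk : 1 ≤ k) (v : ZMod n) :
    stdAddChar ((n : ZMod (n ^ k)) ^ (k - 1) * (v.val : ZMod (n ^ k))) = stdAddChar v := by
  have hn : (n : ℂ) ≠ 0 := NeZero.ne _
  have hnk : n ^ k = n ^ (k - 1) * n := by rw [← pow_succ, Nat.sub_add_cancel hk]
  rw [← natCast_zmod_val v, ← Nat.cast_pow, ← Nat.cast_mul, stdAddChar_apply, stdAddChar_apply,
    toCircle_natCast, toCircle_natCast, natCast_zmod_val, hnk]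
  congr 1
  push_cast
  field_simp

lemma sum_stdAddChar_dot {t : ℕ} (d : Fin t → ZMod n) :
    ∑ c : Fin t → ZMod n, stdAddChar (dot c d) = if d = 0 then (n : ℂ) ^ t else 0 := by
  simp only [dot, stdAddChar_sum]
  rw [← Fintype.prod_sum (fun i x => stdAddChar (x * d i))]
  simp only [AddChar.sum_mulShift _ (isPrimitive_stdAddChar n), ZMod.card, Nat.cast_ite,
    Nat.cast_zero, prod_ite_zero, mem_univ, true_implies, prod_const, card_univ, Fintype.card_fin,
    funext_iff, Pi.zero_apply]

lemma sum_fourier_mul_stdAddChar_dot {t : ℕ} (A : (Fin t → ZMod n) → ℂ) (j : Fin t → ZMod n) :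
    ∑ c, (∑ i, A i * stdAddChar (-dot c i)) * stdAddChar (dot c j) = (n : ℂ) ^ t * A j := by
  have h (c i : Fin t → ZMod n) :
      stdAddChar (-dot c i) * stdAddChar (dot c j) = stdAddChar (dot c (j - i)) := by
    rw [← AddChar.map_add_eq_mul, dot_sub, neg_add_eq_sub]
  simp_rw [sum_mul, mul_assoc, h]
  rw [sum_comm]
  simp_rw [← mul_sum, sum_stdAddChar_dot, sub_eq_zero, mul_ite, mul_zero, sum_ite_eq, mem_univ,
    if_true, mul_comm]

lemma sum_comp_mul_eq_of_sum_stdAddChar_dot_mul {Y : Type*} [Fintype Y] {t : ℕ}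
    (A : (Fin t → ZMod n) → ℂ) (B : Y → ℂ) (J : Y → Fin t → ZMod n) (j₀ : Fin t → ZMod n)
    (C : ℂ) (hJ : ∀ c, ∑ y, stdAddChar (dot c (J y)) * B y = C * stdAddChar (dot c j₀)) :
    ∑ y, A (J y) * B y = C * A j₀ := by
  set Â := fun c => ∑ i, A i * stdAddChar (-dot c i)
  have hn : (n : ℂ) ^ t ≠ 0 := pow_ne_zero _ (NeZero.ne _)
  apply mul_left_cancel₀ hn
  calc (n : ℂ) ^ t * ∑ y, A (J y) * B y
      = ∑ y, (∑ c, Â c * stdAddChar (dot c (J y))) * B y := by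
        rw [mul_sum]
        exact sum_congr rfl fun y _ => by rw [sum_fourier_mul_stdAddChar_dot, mul_assoc]
    _ = ∑ c, Â c * ∑ y, stdAddChar (dot c (J y)) * B y := by
        simp_rw [sum_mul, mul_sum, mul_assoc]
        exact sum_comm
    _ = C * ∑ c, Â c * stdAddChar (dot c j₀) := by
        simp_rw [hJ, mul_sum, mul_left_comm]
    _ = (n : ℂ) ^ t * (C * A j₀) := by
        rw [sum_fourier_mul_stdAddChar_dot, mul_left_comm]

end StdAddChar

section Walsh

variable {p : ℕ} [Fact p.Prime]

lemma walsh2_eq_sum_walsh {r m k : ℕ} (hk : 1 ≤ k)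
    (F : (Fin m → ZMod p) → (Fin r → ZMod p) → ZMod (p ^ k)) (φ : (Fin m → ZMod p) → ZMod p)
    (G : (Fin m → ZMod p) → ZMod (p ^ k))
    (h : (Fin r → ZMod p) × (Fin m → ZMod p) → ZMod (p ^ k))
    (hdef : ∀ x y, h (x, y) =
      F y x + (p : ZMod (p ^ k)) ^ (k - 1) * (((φ y).val : ℕ) : ZMod (p ^ k)) + G y)
    (a : Fin r → ZMod p) (b : Fin m → ZMod p) :
    walsh2 p r m k h (a, b) = ∑ y, walsh p r k (F y) a * stdAddChar (G y) *
      (stdAddChar (φ y) * stdAddChar (-dot b y)) := by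
  simp only [walsh2, walsh, zeta_pow_val, Fintype.sum_prod_type, hdef, neg_add,
    AddChar.map_add_eq_mul, stdAddChar_pow_mul_val hk]
  rw [sum_comm]
  refine sum_congr rfl fun y _ => ?_
  simp_rw [sum_mul]
  exact sum_congr rfl fun x _ => by ring

lemma sum_stdAddChar_dot_mul_eq_of_walshP {m t : ℕ}
    (g₀ gstar : Fin (t + 1) → (Fin m → ZMod p) → ZMod p) (b : Fin m → ZMod p) (w : ℂ)
    (hG : ∀ j : Fin t → ZMod p,
      walshP p m (fun y => (1 - ∑ i, j i) * g₀ 0 y + ∑ i : Fin t, j i * g₀ i.succ y) b =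
        w * zeta p ^ (((1 - ∑ i, j i) * gstar 0 b + ∑ i : Fin t, j i * gstar i.succ b).val))
    (c : Fin t → ZMod p) :
    ∑ y, stdAddChar (dot c (fun i => g₀ 0 y - g₀ i.succ y)) *
        (stdAddChar (g₀ 0 y) * stdAddChar (-dot b y)) =
      w * stdAddChar (gstar 0 b) * stdAddChar (dot c (fun i => gstar 0 b - gstar i.succ b)) := by
  have hGc := hG (-c)
  simp only [walshP, zeta_pow_val, Pi.neg_apply, combination_neg_eq_add_dot,
    AddChar.map_add_eq_mul] at hGc
  rw [mul_assoc, ← hGc]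
  exact sum_congr rfl fun y _ => by ring

lemma walsh2_eq_mul_walsh {r m k t : ℕ} (hk : 1 ≤ k)
    (f : (Fin t → ZMod p) → (Fin r → ZMod p) → ZMod (p ^ k))
    (g₀ gstar : Fin (t + 1) → (Fin m → ZMod p) → ZMod p) (w : (Fin m → ZMod p) → ℂ)
    (hG : ∀ (j : Fin t → ZMod p) (b : Fin m → ZMod p),
      walshP p m (fun y => (1 - ∑ i, j i) * g₀ 0 y + ∑ i : Fin t, j i * g₀ i.succ y) b =
        w b * zeta p ^ (((1 - ∑ i, j i) * gstar 0 b + ∑ i : Fin t, j i * gstar i.succ b).val))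
    (g : (Fin t → ZMod p) → ZMod (p ^ k))
    (h : (Fin r → ZMod p) × (Fin m → ZMod p) → ZMod (p ^ k))
    (hdef : ∀ x y, h (x, y) = f (fun i => g₀ 0 y - g₀ i.succ y) x +
      (p : ZMod (p ^ k)) ^ (k - 1) * (((g₀ 0 y).val : ℕ) : ZMod (p ^ k)) +
      g (fun i => g₀ 0 y - g₀ i.succ y))
    (a : Fin r → ZMod p) (b : Fin m → ZMod p) :
    walsh2 p r m k h (a, b) =
      w b * zeta p ^ (gstar 0 b).val *
        zeta (p ^ k) ^ (g (fun i => gstar 0 b - gstar i.succ b)).val *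
        walsh p r k (f (fun i => gstar 0 b - gstar i.succ b)) a := by
  rw [walsh2_eq_sum_walsh hk (fun y => f (fun i => g₀ 0 y - g₀ i.succ y)) _ _ h hdef,
    sum_comp_mul_eq_of_sum_stdAddChar_dot_mul (fun j => walsh p r k (f j) a * stdAddChar (g j))
      _ _ _ _ (sum_stdAddChar_dot_mul_eq_of_walshP g₀ gstar b _ (hG · b))]
  simp only [zeta_pow_val]
  ring

end Walsh

theorem stmt11 (p k t r m s : ℕ) [Fact (Nat.Prime p)]
    (hk : 1 ≤ k)
    (f : (Fin t → ZMod p) → (Fin r → ZMod p) → ZMod (p ^ k))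
    (hf : ∀ i a, ‖walsh p r k (f i) a‖ = (p : ℝ) ^ (((r : ℝ) + (s : ℝ)) / 2) ∨
      walsh p r k (f i) a = 0)
    (g0 : Fin (t + 1) → (Fin m → ZMod p) → ZMod p)
    (gstar : Fin (t + 1) → (Fin m → ZMod p) → ZMod p)
    (u : (Fin m → ZMod p) → ℂ)
    (hu : ∀ b, u b = 1 ∨ u b = -1 ∨ u b = Complex.I ∨ u b = -Complex.I)
    (hG : ∀ (j : Fin t → ZMod p) (b : Fin m → ZMod p),
      walshP p m (fun y => (1 - ∑ i, j i) * g0 0 y + ∑ i : Fin t, j i * g0 i.succ y) b =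
        u b * ((p : ℝ) ^ ((m : ℝ) / 2) : ℝ) *
          zeta p ^ (((1 - ∑ i, j i) * gstar 0 b + ∑ i : Fin t, j i * gstar i.succ b).val))
    (g : (Fin t → ZMod p) → ZMod (p ^ k))
    (h : (Fin r → ZMod p) × (Fin m → ZMod p) → ZMod (p ^ k))
    (hdef : ∀ x y, h (x, y) = f (fun i => g0 0 y - g0 i.succ y) x +
      (p : ZMod (p ^ k)) ^ (k - 1) * (((g0 0 y).val : ℕ) : ZMod (p ^ k)) +
      g (fun i => g0 0 y - g0 i.succ y)) :
    (∀ (a : Fin r → ZMod p) (b : Fin m → ZMod p),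
      walsh2 p r m k h (a, b) =
        u b * ((p : ℝ) ^ ((m : ℝ) / 2) : ℝ) * zeta p ^ ((gstar 0 b).val) *
          zeta (p ^ k) ^ ((g (fun i => gstar 0 b - gstar i.succ b)).val) *
          walsh p r k (f (fun i => gstar 0 b - gstar i.succ b)) a) ∧
    (∀ (a : Fin r → ZMod p) (b : Fin m → ZMod p),
      ‖walsh2 p r m k h (a, b)‖ =
          (p : ℝ) ^ (((r : ℝ) + (m : ℝ) + (s : ℝ)) / 2) ∨
        walsh2 p r m k h (a, b) = 0) := by
  have key := walsh2_eq_mul_walsh hk f g0 gstar _ hG g h hdef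
  refine ⟨key, fun a b => ?_⟩
  rcases hf (fun i => gstar 0 b - gstar i.succ b) a with hW | hW
  · have hub : ‖u b‖ = 1 := by rcases hu b with hub | hub | hub | hub <;> simp [hub]
    have hp : (0 : ℝ) < p := Nat.cast_pos.mpr (Fact.out : p.Prime).pos
    left
    rw [key, norm_mul, norm_mul, norm_mul, norm_mul, hW, hub, zeta_pow_val, zeta_pow_val,
      norm_stdAddChar, norm_stdAddChar, Complex.norm_real, Real.norm_of_nonneg (by positivity),
      one_mul, mul_one, mul_one, ← Real.rpow_add hp]
    ring_nf
  · right
    rw [key, hW, mul_zero]
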